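/- arXiv:2107.10119 — 2 statements merged into one kernel-verified Lean document; each statement's English description precedes it below -/
import Mathlib

section
/- Suppose posterior signal distributions (on a finite set Σ) depend on a scalar parameter p via q_σ(p) = (1−p)·q₀(σ) + p·q₁(σ), where q₀, q₁ are distinct probability mass functions on Σ. Let Q̄ = q(P) be the distribution at the prior parameter P. Then the function N(p) = Σ_σ (q₁(σ) − q₀(σ)) · (log(q_σ(p)) − log(q̄_σ)) satisfies N(P) = 0 and N is strictly increasing on (0,1); in particular N(p) ≠ 0 for every p ≠ P. -/
open Finset Set

/-- The log-scoring-rule derivative term `N` vanishes at the prior `P`, is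
strictly increasing on `(0,1)`, hence is nonzero away from `P`. -/
theorem N_zero_at_prior_strictMono_and_ne
    {S : Type*} [Fintype S]
    (q₀ q₁ : S → ℝ) (hq₀ : ∀ σ, 0 < q₀ σ) (hq₁ : ∀ σ, 0 < q₁ σ)
    (hq₀s : ∑ σ, q₀ σ = 1) (hq₁s : ∑ σ, q₁ σ = 1) (hne : q₀ ≠ q₁)
    (P : ℝ) (hP : P ∈ Ioo (0:ℝ) 1)
    (N : ℝ → ℝ)
    (hN : ∀ p, N p = ∑ σ, (q₁ σ - q₀ σ) *
        (Real.log ((1 - p) * q₀ σ + p * q₁ σ) -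
          Real.log ((1 - P) * q₀ σ + P * q₁ σ))) :
    N P = 0 ∧ StrictMonoOn N (Ioo (0:ℝ) 1) ∧
      ∀ p ∈ Ioo (0:ℝ) 1, p ≠ P → N p ≠ 0 := by
  have hNP : N P = 0 := by simp [hN]
  -- positivity of mixture on (0,1)
  have hq : ∀ p ∈ Ioo (0:ℝ) 1, ∀ σ, 0 < (1 - p) * q₀ σ + p * q₁ σ := by
    intro p hp σ
    have h1 : 0 < 1 - p := by linarith [hp.2]
    have h2 : 0 < p := hp.1
    have := hq₀ σ; have := hq₁ σ
    positivity
  -- derivative of N at each point of (0,1)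
  have hderiv : ∀ p ∈ Ioo (0:ℝ) 1,
      HasDerivAt N (∑ σ, (q₁ σ - q₀ σ) * ((q₁ σ - q₀ σ) /
        ((1 - p) * q₀ σ + p * q₁ σ))) p := by
    intro p hp
    have h : HasDerivAt (fun p => ∑ σ, (q₁ σ - q₀ σ) *
        (Real.log ((1 - p) * q₀ σ + p * q₁ σ) -
          Real.log ((1 - P) * q₀ σ + P * q₁ σ)))
        (∑ σ, (q₁ σ - q₀ σ) * ((q₁ σ - q₀ σ) /
        ((1 - p) * q₀ σ + p * q₁ σ))) p := by
      apply HasDerivAt.fun_sum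
      intro σ _
      have hinner : HasDerivAt (fun p : ℝ => (1 - p) * q₀ σ + p * q₁ σ)
          (q₁ σ - q₀ σ) p := by
        have h₁ : HasDerivAt (fun p : ℝ => (1 - p) * q₀ σ + p * q₁ σ)
            ((0 - 1) * q₀ σ + 1 * q₁ σ) p :=
          (((hasDerivAt_const p (1:ℝ)).sub (hasDerivAt_id p)).mul_const _).add
            ((hasDerivAt_id p).mul_const _)
        convert h₁ using 1; ring
      have hlog := hinner.log (ne_of_gt (hq p hp σ))
      exact (hlog.sub_const _).const_mul _
    exact h.congr_of_eventuallyEq (Filter.Eventually.of_forall fun x => hN x)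
  -- positivity of the derivative
  have hpos : ∀ p ∈ Ioo (0:ℝ) 1,
      0 < ∑ σ, (q₁ σ - q₀ σ) * ((q₁ σ - q₀ σ) /
        ((1 - p) * q₀ σ + p * q₁ σ)) := by
    intro p hp
    obtain ⟨σ₀, hσ₀⟩ : ∃ σ, q₀ σ ≠ q₁ σ := by
      by_contra h
      push_neg at h
      exact hne (funext h)
    apply Finset.sum_pos'
    · intro σ _
      have := hq p hp σ
      have : 0 ≤ (q₁ σ - q₀ σ) ^ 2 / ((1 - p) * q₀ σ + p * q₁ σ) := by positivity
      calc (0:ℝ) ≤ (q₁ σ - q₀ σ) ^ 2 / ((1 - p) * q₀ σ + p * q₁ σ) := this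
        _ = (q₁ σ - q₀ σ) * ((q₁ σ - q₀ σ) / ((1 - p) * q₀ σ + p * q₁ σ)) := by
            ring
    · refine ⟨σ₀, Finset.mem_univ _, ?_⟩
      have hd : (q₁ σ₀ - q₀ σ₀) ≠ 0 := sub_ne_zero.mpr (Ne.symm hσ₀)
      have hq' := hq p hp σ₀
      have : 0 < (q₁ σ₀ - q₀ σ₀) ^ 2 / ((1 - p) * q₀ σ₀ + p * q₁ σ₀) := by
        positivity
      calc (0:ℝ) < (q₁ σ₀ - q₀ σ₀) ^ 2 / ((1 - p) * q₀ σ₀ + p * q₁ σ₀) := this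
        _ = (q₁ σ₀ - q₀ σ₀) * ((q₁ σ₀ - q₀ σ₀) / ((1 - p) * q₀ σ₀ + p * q₁ σ₀)) := by
            ring
  have hmono : StrictMonoOn N (Ioo (0:ℝ) 1) := by
    apply strictMonoOn_of_deriv_pos (convex_Ioo 0 1)
    · intro x hx
      exact (hderiv x hx).differentiableAt.continuousAt.continuousWithinAt
    · intro x hx
      rw [interior_Ioo] at hx
      rw [(hderiv x hx).deriv]
      exact hpos x hx
  refine ⟨hNP, hmono, fun p hp hpP => ?_⟩
  rcases lt_or_gt_of_ne hpP with h | h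
  · have := hmono hp hP h
    rw [hNP] at this
    exact ne_of_lt this
  · have := hmono hP hp h
    rw [hNP] at this
    exact ne_of_gt this
end

section
/- Let P ∈ (0,1), let f₀, f₁ be strictly positive PDFs on ℝ with f₀ ≠ f₁ on a positive-measure set, and define for p_A, p_B ∈ [0,1] the payment R(p_A, p_B) = log( p_A·p_B/P + (1−p_A)(1−p_B)/(1−P) ). For an agent with true posterior p* whose peer's signal S has conditional density p[s | p*] = (1−p*)·f₀(s) + p*·f₁(s) and whose peer reports the truthful posterior π(s) = P·f₁(s)/((1−P)f₀(s) + P·f₁(s)), the expected payment ∫ p[s | p*] · R(p, π(s)) ds is uniquely maximized over reports p ∈ [0,1] at p = p*. -/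
open MeasureTheory Set

/-- Strict truthfulness of the (Extended) Common Ground Mechanism: the
expected payment against a truthful peer is uniquely maximized at the true
posterior `p*`. -/
theorem ECGM_strictly_truthful
    (P : ℝ) (hP : P ∈ Ioo (0:ℝ) 1)
    (f₀ f₁ : ℝ → ℝ)
    (hf₀pos : ∀ s, 0 < f₀ s) (hf₁pos : ∀ s, 0 < f₁ s)
    (hf₀int : Integrable f₀) (hf₁int : Integrable f₁)
    (hf₀pdf : ∫ s, f₀ s = 1) (hf₁pdf : ∫ s, f₁ s = 1)
    (hne : ¬ f₀ =ᵐ[volume] f₁)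
    (R : ℝ → ℝ → ℝ)
    (hR : ∀ pA pB, R pA pB =
        Real.log (pA * pB / P + (1 - pA) * (1 - pB) / (1 - P)))
    (π : ℝ → ℝ)
    (hπ : ∀ s, π s = P * f₁ s / ((1 - P) * f₀ s + P * f₁ s))
    (pstar : ℝ) (hpstar : pstar ∈ Icc (0:ℝ) 1)
    (dens : ℝ → ℝ)
    (hdens : ∀ s, dens s = (1 - pstar) * f₀ s + pstar * f₁ s)
    (EP : ℝ → ℝ)
    (hEP : ∀ p, EP p = ∫ s, dens s * R p (π s))
    (hint : ∀ p ∈ Icc (0:ℝ) 1, Integrable (fun s => dens s * R p (π s))) :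
    ∀ p ∈ Icc (0:ℝ) 1, p ≠ pstar → EP p < EP pstar := by
  intro p hp hpne
  obtain ⟨hP0, hP1⟩ := hP
  have hP1' : (0:ℝ) < 1 - P := by linarith
  -- positivity of convex combinations
  have mixpos : ∀ q : ℝ, q ∈ Icc (0:ℝ) 1 → ∀ s, 0 < (1 - q) * f₀ s + q * f₁ s := by
    intro q hq s
    rcases eq_or_lt_of_le hq.1 with h0 | h0
    · simp [← h0, hf₀pos s]
    · have h1 : 0 ≤ (1 - q) * f₀ s :=
        mul_nonneg (by linarith [hq.2]) (hf₀pos s).le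
      have h2 : 0 < q * f₁ s := mul_pos h0 (hf₁pos s)
      linarith
  have hgpos : ∀ s, 0 < (1 - P) * f₀ s + P * f₁ s := by
    intro s
    have := mul_pos hP1' (hf₀pos s)
    have := mul_pos hP0 (hf₁pos s)
    linarith
  have hdpos : ∀ s, 0 < dens s := by
    intro s; rw [hdens s]; exact mixpos pstar hpstar s
  set dp : ℝ → ℝ := fun s => (1 - p) * f₀ s + p * f₁ s with hdp
  have hdppos : ∀ s, 0 < dp s := mixpos p hp
  -- the payment against a truthful peer
  have hRval : ∀ q : ℝ, q ∈ Icc (0:ℝ) 1 → ∀ s,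
      R q (π s) = Real.log ((1 - q) * f₀ s + q * f₁ s)
        - Real.log ((1 - P) * f₀ s + P * f₁ s) := by
    intro q hq s
    rw [hR, hπ]
    have hg := hgpos s
    have h1 : q * (P * f₁ s / ((1 - P) * f₀ s + P * f₁ s)) / P
        + (1 - q) * (1 - P * f₁ s / ((1 - P) * f₀ s + P * f₁ s)) / (1 - P)
        = ((1 - q) * f₀ s + q * f₁ s) / ((1 - P) * f₀ s + P * f₁ s) := by
      field_simp
      ring
    rw [h1, Real.log_div (mixpos q hq s).ne' hg.ne']
  -- the difference of payments
  have hu_eq : ∀ s, dens s * R p (π s) - dens s * R pstar (π s)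
      = dens s * Real.log (dp s / dens s) := by
    intro s
    rw [hRval p hp s, hRval pstar hpstar s,
      Real.log_div (hdppos s).ne' (hdpos s).ne', hdens s]
    ring
  have hu_int : Integrable (fun s => dens s * Real.log (dp s / dens s)) := by
    have := (hint p hp).sub (hint pstar hpstar)
    exact this.congr (Filter.Eventually.of_forall hu_eq)
  -- v = dp - dens, integrable, integral 0
  have hv_int : Integrable (fun s => dp s - dens s) := by
    have h1 : Integrable dp := ((hf₀int.const_mul (1 - p)).add (hf₁int.const_mul p))
    have h2 : Integrable dens := by
      have : Integrable (fun s => (1 - pstar) * f₀ s + pstar * f₁ s) :=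
        (hf₀int.const_mul (1 - pstar)).add (hf₁int.const_mul pstar)
      exact this.congr (Filter.Eventually.of_forall fun s => (hdens s).symm)
    exact h1.sub h2
  have hv_val : (∫ s, (dp s - dens s)) = 0 := by
    have e : (fun s => dp s - dens s) = fun s => (p - pstar) * (f₁ s - f₀ s) := by
      funext s; rw [hdens s]; show (1 - p) * f₀ s + p * f₁ s - _ = _; ring
    rw [e, integral_const_mul, integral_sub hf₁int hf₀int, hf₀pdf, hf₁pdf]
    ring
  -- w = v - u is nonnegative, and positive where f₀ ≠ f₁
  set w : ℝ → ℝ := fun s => (dp s - dens s) - dens s * Real.log (dp s / dens s) with hw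
  have hw_int : Integrable w := hv_int.sub hu_int
  have hw_nonneg : ∀ s, 0 ≤ w s := by
    intro s
    show 0 ≤ dp s - dens s - dens s * Real.log (dp s / dens s)
    have hx : 0 < dp s / dens s := div_pos (hdppos s) (hdpos s)
    have hlog := Real.log_le_sub_one_of_pos hx
    have hds := (hdpos s).ne'
    have h1 : dens s * (dp s / dens s - 1) = dp s - dens s := by field_simp
    linarith [mul_le_mul_of_nonneg_left hlog (hdpos s).le]
  have hw_pos : ∀ s, f₀ s ≠ f₁ s → 0 < w s := by
    intro s hs
    have hdps : dp s = (1 - p) * f₀ s + p * f₁ s := rfl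
    have hne' : dp s ≠ dens s := by
      intro h
      rw [hdens s, hdps] at h
      have h2 : (p - pstar) * (f₁ s - f₀ s) = 0 := by linear_combination h
      rcases mul_eq_zero.1 h2 with h' | h'
      · exact hpne (by linarith)
      · exact hs (by linarith)
    have hx : 0 < dp s / dens s := div_pos (hdppos s) (hdpos s)
    have hx1 : dp s / dens s ≠ 1 := fun h =>
      hne' ((div_eq_one_iff_eq (hdpos s).ne').1 h)
    have hlog := Real.log_lt_sub_one_of_pos hx hx1
    have h1 : dens s * (dp s / dens s - 1) = dp s - dens s := by
      have hds := (hdpos s).ne'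
      field_simp
    show 0 < dp s - dens s - dens s * Real.log (dp s / dens s)
    linarith [mul_lt_mul_of_pos_left hlog (hdpos s)]
  -- positive measure where f₀ ≠ f₁
  have hA : (0:ENNReal) < volume {s | f₀ s ≠ f₁ s} := by
    rw [pos_iff_ne_zero]
    intro h
    exact hne (Filter.eventuallyEq_iff_exists_mem.2 ⟨{s | f₀ s = f₁ s},
      by rwa [mem_ae_iff, show {s | f₀ s = f₁ s}ᶜ = {s | f₀ s ≠ f₁ s} from rfl],
      fun s hs => hs⟩)
  have hw_intpos : 0 < ∫ s, w s := by
    rw [integral_pos_iff_support_of_nonneg_ae (Filter.Eventually.of_forall hw_nonneg) hw_int]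
    refine lt_of_lt_of_le hA (measure_mono ?_)
    intro s hs
    exact (hw_pos s hs).ne'
  -- conclude
  have hu_val : (∫ s, dens s * Real.log (dp s / dens s)) < 0 := by
    have : (∫ s, w s) = (∫ s, (dp s - dens s)) - ∫ s, dens s * Real.log (dp s / dens s) :=
      integral_sub hv_int hu_int
    rw [this, hv_val] at hw_intpos
    linarith
  have hdiff : EP p - EP pstar = ∫ s, dens s * Real.log (dp s / dens s) := by
    rw [hEP p, hEP pstar, ← integral_sub (hint p hp) (hint pstar hpstar)]
    exact integral_congr_ae (Filter.Eventually.of_forall hu_eq)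
  linarith
end
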